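/- arXiv:0806.3421 — 3 statements merged into one kernel-verified Lean document; each statement's English description precedes it below -/
import Mathlib

section
/- Let p be a prime and m ≥ 1. In the quotient ring (ZMod (p^2))[Y] / (∏_{i=0}^{p-1} (Y - i)), the element Σ_{i=0}^{p-1} (Y - i)^(p^m - 1) equals the element Σ_{i=0}^{p-1} (Y - i)^(p - 1). -/
/-!
Both sides are congruent modulo `∏ (Y - i)` as soon as they agree at every `j < p`, because the
linear factors `Y - i` are pairwise comaximal: their differences `j - i` are units of
`ZMod (p ^ 2)`. At `Y = j` the summands with `i = j` vanish on both sides, and for `i ≠ j` the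
unit `j - i` has order dividing `φ (p ^ 2) = p (p - 1)`, which divides the difference
`p ^ m - p` of the two exponents.
-/

open Polynomial

theorem Nat.mul_sub_one_dvd_pow_sub_self (p : ℕ) {m : ℕ} (hm : 1 ≤ m) :
    p * (p - 1) ∣ p ^ m - p := by
  obtain ⟨n, rfl⟩ : ∃ n, m = n + 1 := ⟨m - 1, by omega⟩
  rw [pow_succ', ← Nat.mul_sub_one]
  exact Nat.mul_dvd_mul_left p (by simpa using Nat.sub_dvd_pow_sub_pow p 1 n)

theorem ZMod.pow_prime_pow_sub_one_of_isUnit {p : ℕ} (hp : p.Prime) {m : ℕ} (hm : 1 ≤ m)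
    {a : ZMod (p ^ 2)} (ha : IsUnit a) : a ^ (p ^ m - 1) = a ^ (p - 1) := by
  obtain ⟨u, rfl⟩ := ha
  have hu : u ^ (p ^ m - p) = 1 := by
    obtain ⟨k, hk⟩ := Nat.mul_sub_one_dvd_pow_sub_self p hm
    have htotient : Nat.totient (p ^ 2) = p * (p - 1) := by
      simpa using Nat.totient_prime_pow_succ hp 1
    rw [hk, pow_mul, ← htotient, ZMod.pow_totient, one_pow]
  have hle : p ≤ p ^ m := Nat.le_self_pow (by omega) p
  have hp_gt_one := hp.one_lt
  rw [show p ^ m - 1 = (p ^ m - p) + (p - 1) by omega, pow_add, ← Units.val_pow_eq_pow_val, hu,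
    Units.val_one, one_mul]

theorem ZMod.isUnit_natCast_sub_natCast {p k i j : ℕ} (hp : p.Prime) (hi : i < p) (hj : j < p)
    (hij : i ≠ j) : IsUnit ((i : ZMod (p ^ k)) - j) := by
  wlog hji : j < i generalizing i j
  · rw [← neg_sub]
    exact (this hj hi hij.symm (by omega)).neg
  rw [← Nat.cast_sub hji.le, ZMod.isUnit_iff_coprime]
  exact Nat.Coprime.pow_right k <| Nat.coprime_comm.mp <|
    hp.coprime_iff_not_dvd.mpr (Nat.not_dvd_of_pos_of_lt (by omega) (by omega))

theorem Polynomial.prod_X_sub_C_dvd_of_isRoot {R ι : Type*} [CommRing R] {s : Finset ι}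
    {a : ι → R} (ha : (s : Set ι).Pairwise fun i j => IsUnit (a i - a j)) {f : R[X]}
    (hf : ∀ i ∈ s, f.IsRoot (a i)) : ∏ i ∈ s, (X - C (a i)) ∣ f :=
  Finset.prod_dvd_of_coprime (ha.mono' fun _ _ h => isCoprime_X_sub_C_of_isUnit_sub h)
    fun i hi => dvd_iff_isRoot.mpr (hf i hi)

theorem stmt_3 (p : ℕ) (hp : p.Prime) (m : ℕ) (hm : 1 ≤ m) :
    Ideal.Quotient.mk
        (Ideal.span {∏ i ∈ Finset.range p,
          (Polynomial.X - Polynomial.C ((i : ℕ) : ZMod (p ^ 2)))})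
        (∑ i ∈ Finset.range p,
          (Polynomial.X - Polynomial.C ((i : ℕ) : ZMod (p ^ 2))) ^ (p ^ m - 1)) =
      Ideal.Quotient.mk _
        (∑ i ∈ Finset.range p,
          (Polynomial.X - Polynomial.C ((i : ℕ) : ZMod (p ^ 2))) ^ (p - 1)) := by
  rw [Ideal.Quotient.eq, Ideal.mem_span_singleton]
  refine prod_X_sub_C_dvd_of_isRoot (fun i hi j hj hij => ZMod.isUnit_natCast_sub_natCast hp
    (Finset.mem_range.mp hi) (Finset.mem_range.mp hj) hij) fun j hj => ?_
  simp only [IsRoot, eval_sub, eval_finsetSum, eval_pow, eval_X, eval_C, sub_eq_zero]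
  refine Finset.sum_congr rfl fun i hi => ?_
  rcases eq_or_ne j i with rfl | hji
  · have hpow : 1 < p ^ m := Nat.one_lt_pow (by omega) hp.one_lt
    rw [sub_self, zero_pow (by omega), zero_pow (by have := hp.one_lt; omega)]
  · exact ZMod.pow_prime_pow_sub_one_of_isUnit hp hm <| ZMod.isUnit_natCast_sub_natCast hp
      (Finset.mem_range.mp hj) (Finset.mem_range.mp hi) hji
end

section
/- Let p be a prime and m ≥ 1. In the polynomial ring (ZMod (p^2))[x, y], there is a polynomial c whose degree in y is strictly less than p - 1 such that Σ_{i=0}^{p-1} (y - i·x)^(p^m - 1) is congruent to p · x^(p^m - p) · y^(p-1) + c modulo the ideal generated by ∏_{i=0}^{p-1} (y - i·x). -/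
/-!
Take `c = x ^ (p ^ m - p) * (∑ i, (y - i x) ^ (p - 1) - p y ^ (p - 1))`. Its `y`-degree is below
`p - 1` because the `p` summands are monic of degree `p - 1`, and the remaining difference
`∑ i, (y - i x) ^ (p ^ m - 1) - x ^ (p ^ m - p) ∑ i, (y - i x) ^ (p - 1)` vanishes at every
`y = a x`, `a < p`: there `(a - i) ^ (p ^ m - 1) = (a - i) ^ (p - 1)` in `ZMod (p ^ 2)`, as
`φ (p ^ 2) = p (p - 1)` divides `p ^ m - p`. The roots `a x` differ by unit multiples of `x`,
which is not a zero divisor, so vanishing at all of them forces divisibility by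
`∏ i, (y - i x)`. The computation takes place in `B[y]`, with `B` the polynomials in `x`.
-/

open Polynomial

theorem Nat.totient_prime_sq_dvd_pow_sub_self {p : ℕ} (hp : p.Prime) {m : ℕ} (hm : 1 ≤ m) :
    Nat.totient (p ^ 2) ∣ p ^ m - p := by
  obtain ⟨k, rfl⟩ := Nat.exists_eq_add_of_le' hm
  rw [Nat.totient_prime_pow_succ hp, pow_one, pow_succ', ← Nat.mul_sub_one]
  exact mul_dvd_mul_left p (by simpa using Nat.sub_dvd_pow_sub_pow p 1 k)

namespace ZMod

theorem isUnit_natCast_sub_natCast_pow {p d a b : ℕ} (hp : p.Prime) (hd : 0 < d) (ha : a < p)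
    (hb : b < p) (hab : a ≠ b) : IsUnit ((a : ZMod (p ^ d)) - b) := by
  wlog h : b < a generalizing a b
  · simpa using (this hb ha hab.symm (by omega)).neg
  rw [← Nat.cast_sub h.le, isUnit_natCast_iff_not_dvd_pow hp hd]
  exact Nat.not_dvd_of_pos_of_lt (by omega) (by omega)

theorem pow_prime_pow_sub_one_of_isUnit_s4 {p : ℕ} (hp : p.Prime) {m : ℕ} (hm : 1 ≤ m)
    {u : ZMod (p ^ 2)} (hu : IsUnit u) : u ^ (p ^ m - 1) = u ^ (p - 1) := by
  obtain ⟨u, rfl⟩ := hu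
  have hpm : p ≤ p ^ m := Nat.le_self_pow (by omega) p
  have := hp.pos
  rw [← Units.val_pow_eq_pow_val, ← Units.val_pow_eq_pow_val, pow_eq_pow_iff_modEq.mpr]
  refine ((Nat.modEq_iff_dvd' (by omega)).mpr ?_).symm.of_dvd
    (orderOf_dvd_of_pow_eq_one (ZMod.pow_totient u))
  rw [show p ^ m - 1 - (p - 1) = p ^ m - p by omega]
  exact Nat.totient_prime_sq_dvd_pow_sub_self hp hm

theorem natCast_sub_natCast_pow_prime_pow_sub_one {p : ℕ} (hp : p.Prime) {m : ℕ}
    (hm : 1 ≤ m) {a b : ℕ} (ha : a < p) (hb : b < p) :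
    ((a : ZMod (p ^ 2)) - b) ^ (p ^ m - 1) = ((a : ZMod (p ^ 2)) - b) ^ (p - 1) := by
  have hpm : p ≤ p ^ m := Nat.le_self_pow (by omega) p
  have := hp.two_le
  rcases eq_or_ne a b with rfl | hab
  · rw [sub_self, zero_pow (by omega), zero_pow (by omega)]
  · exact pow_prime_pow_sub_one_of_isUnit_s4 hp hm
      (isUnit_natCast_sub_natCast_pow hp two_pos ha hb hab)

end ZMod

namespace Polynomial

variable {B ι : Type*} [CommRing B]

theorem prod_X_sub_C_dvd_of_eval_eq_zero (s : Finset ι) {ξ : ι → B}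
    (hξ : (s : Set ι).Pairwise fun a b => IsRegular (ξ a - ξ b)) {g : B[X]}
    (hg : ∀ a ∈ s, g.eval (ξ a) = 0) : ∏ a ∈ s, (X - C (ξ a)) ∣ g := by
  classical
  induction s using Finset.induction_on generalizing g with
  | empty => simp
  | @insert a s ha ih =>
    obtain ⟨g', rfl⟩ := dvd_iff_isRoot.mpr (hg a (Finset.mem_insert_self a s))
    rw [Finset.prod_insert ha]
    refine mul_dvd_mul_left _ (ih (hξ.mono (by simp)) fun b hb => ?_)
    have hb' := hg b (Finset.mem_insert_of_mem hb)
    rw [eval_mul, eval_sub, eval_X, eval_C, ← mul_zero (ξ b - ξ a)] at hb'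
    exact (hξ (by simp [hb]) (by simp) (by rintro rfl; exact ha hb)).left hb'

theorem degree_X_sub_C_pow_sub_X_pow_lt (c : B) (n : ℕ) :
    ((X - C c) ^ n - X ^ n).degree < (n : WithBot ℕ) := by
  nontriviality B
  have hmon := (monic_X_sub_C c).pow n
  have hdeg : ((X - C c) ^ n).degree = (n : WithBot ℕ) := by
    rw [degree_eq_natDegree hmon.ne_zero, (monic_X_sub_C c).natDegree_pow, natDegree_X_sub_C,
      mul_one]
  simpa [hdeg] using degree_sub_lt_left (q := X ^ n) (by rw [hdeg, degree_X_pow]) hmon.ne_zero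
    (by rw [hmon.leadingCoeff, leadingCoeff_X_pow])

theorem natDegree_sum_X_sub_C_pow_sub_lt (s : Finset ι) (f : ι → B) {n : ℕ} (hn : n ≠ 0) :
    (∑ i ∈ s, (X - C (f i)) ^ n - s.card * X ^ n).natDegree < n := by
  rw [← nsmul_eq_mul, ← Finset.sum_const, ← Finset.sum_sub_distrib]
  by_cases h0 : ∑ i ∈ s, ((X - C (f i)) ^ n - X ^ n) = 0
  · rw [h0, natDegree_zero]; omega
  rw [natDegree_lt_iff_degree_lt h0]
  exact (degree_sum_le _ _).trans_lt ((Finset.sup_lt_iff (WithBot.bot_lt_coe n)).mpr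
    fun i _ => degree_X_sub_C_pow_sub_X_pow_lt _ _)

theorem natCast_mul_C (n : ℕ) (x : B) : (n : B[X]) * C x = C (n * x) := by
  rw [C_mul, map_natCast]

end Polynomial

namespace MvPolynomial

variable (R : Type*) [CommSemiring R] {σ : Type*} [DecidableEq σ]

noncomputable def polynomialInVarEquiv (a : σ) :
    MvPolynomial σ R ≃ₐ[R] (MvPolynomial {b // b ≠ a} R)[X] :=
  (renameEquiv R (Equiv.optionSubtypeNe a).symm).trans (optionEquivLeft R _)

variable {R}

@[simp]
theorem polynomialInVarEquiv_X_self (a : σ) :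
    polynomialInVarEquiv R a (X a) = Polynomial.X := by
  simp [polynomialInVarEquiv, optionEquivLeft_X_none]

theorem polynomialInVarEquiv_X_of_ne {a b : σ} (h : b ≠ a) :
    polynomialInVarEquiv R a (X b) = Polynomial.C (X ⟨b, h⟩) := by
  simp [polynomialInVarEquiv, Equiv.optionSubtypeNe_symm_of_ne h, optionEquivLeft_X_some]

theorem natDegree_polynomialInVarEquiv (a : σ) (f : MvPolynomial σ R) :
    (polynomialInVarEquiv R a f).natDegree = degreeOf a f :=
  (degreeOf_eq_natDegree a f).symm

end MvPolynomial

section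

variable {p : ℕ} {B : Type*} [CommRing B] [Algebra (ZMod (p ^ 2)) B]

theorem prod_X_sub_natCast_mul_C_dvd (hp : p.Prime) {m : ℕ} (hm : 1 ≤ m) {x : B}
    (hx : IsRegular x) :
    ∏ i ∈ Finset.range p, (X - (i : B[X]) * C x) ∣
      ∑ i ∈ Finset.range p, (X - (i : B[X]) * C x) ^ (p ^ m - 1) -
        C x ^ (p ^ m - p) * ∑ i ∈ Finset.range p, (X - (i : B[X]) * C x) ^ (p - 1) := by
  have hpm : p ≤ p ^ m := Nat.le_self_pow (by omega) p
  have := hp.pos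
  have hcast : ∀ a b : ℕ, (a : B) * x - b * x = algebraMap (ZMod (p ^ 2)) B (a - b) * x := by
    intro a b; simp [sub_mul]
  simp only [natCast_mul_C]
  refine prod_X_sub_C_dvd_of_eval_eq_zero _ (fun a ha b hb hab => ?_) fun a ha => ?_
  · dsimp only
    rw [hcast]
    exact ((ZMod.isUnit_natCast_sub_natCast_pow hp two_pos (Finset.mem_range.mp ha)
      (Finset.mem_range.mp hb) hab).map _).isRegular.mul hx
  · simp only [eval_sub, eval_finsetSum, eval_pow, eval_X, eval_C, eval_mul, Finset.mul_sum,
      ← Finset.sum_sub_distrib]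
    refine Finset.sum_eq_zero fun i hi => ?_
    rw [hcast, mul_pow, mul_pow, ← map_pow, ← map_pow,
      ZMod.natCast_sub_natCast_pow_prime_pow_sub_one hp hm (Finset.mem_range.mp ha)
        (Finset.mem_range.mp hi), show p ^ m - 1 = (p ^ m - p) + (p - 1) by omega, pow_add]
    ring

theorem exists_natDegree_lt_and_prod_X_sub_natCast_mul_C_dvd (hp : p.Prime) {m : ℕ}
    (hm : 1 ≤ m) {x : B} (hx : IsRegular x) :
    ∃ c : B[X], c.natDegree < p - 1 ∧
      ∏ i ∈ Finset.range p, (X - (i : B[X]) * C x) ∣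
        ∑ i ∈ Finset.range p, (X - (i : B[X]) * C x) ^ (p ^ m - 1) -
          ((p : B[X]) * C x ^ (p ^ m - p) * X ^ (p - 1) + c) := by
  refine ⟨C x ^ (p ^ m - p) *
      (∑ i ∈ Finset.range p, (X - (i : B[X]) * C x) ^ (p - 1) - (p : B[X]) * X ^ (p - 1)),
    ?_, ?_⟩
  · rw [← C_pow]
    refine (natDegree_C_mul_le _ _).trans_lt ?_
    have hdeg := natDegree_sum_X_sub_C_pow_sub_lt (Finset.range p) (fun i => (i : B) * x)
      (by have := hp.two_le; omega : p - 1 ≠ 0)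
    simpa only [natCast_mul_C, Finset.card_range] using hdeg
  · convert prod_X_sub_natCast_mul_C_dvd hp hm hx using 1
    ring

end

open MvPolynomial in
theorem stmt_4 (p : ℕ) (hp : p.Prime) (m : ℕ) (hm : 1 ≤ m) :
    ∃ c : MvPolynomial (Fin 2) (ZMod (p ^ 2)),
      MvPolynomial.degreeOf 1 c < p - 1 ∧
      (∑ i ∈ Finset.range p, (X 1 - (i : MvPolynomial (Fin 2) (ZMod (p ^ 2))) * X 0) ^ (p ^ m - 1))
          - ((p : MvPolynomial (Fin 2) (ZMod (p ^ 2))) * (X 0) ^ (p ^ m - p) * (X 1) ^ (p - 1) + c)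
        ∈ Ideal.span
            {∏ i ∈ Finset.range p,
              (X 1 - (i : MvPolynomial (Fin 2) (ZMod (p ^ 2))) * X 0)} := by
  let e := polynomialInVarEquiv (ZMod (p ^ 2)) (1 : Fin 2)
  obtain ⟨c, hdeg, hdvd⟩ := exists_natDegree_lt_and_prod_X_sub_natCast_mul_C_dvd hp hm
    (x := (X ⟨0, by decide⟩ : MvPolynomial {b : Fin 2 // b ≠ 1} (ZMod (p ^ 2)))) isRegular_X
  refine ⟨e.symm c, by rwa [← natDegree_polynomialInVarEquiv, AlgEquiv.apply_symm_apply], ?_⟩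
  rw [Ideal.mem_span_singleton, ← map_dvd_iff e]
  simpa [e, polynomialInVarEquiv_X_of_ne (show (0 : Fin 2) ≠ 1 by decide)] using hdvd
end

section
/- Let p be a prime, R a commutative algebra over ZMod p, and u ∈ R a regular element (non-zerodivisor). Then the R-algebra map R[z]/(z^p − u^(p-1)·z) → ∏_{i=0}^{p-1} R whose i-th component sends z to i·u is injective. -/
/-! Since `i ^ p = i` in `ZMod p`, every `i * u` is a root of `X ^ p - u ^ (p - 1) * X`, and the
differences `(i - j) * u` are non-zerodivisors because `i - j` is a unit. Splitting off one linear
factor at a time, a polynomial vanishing at all the `i * u` is divisible by `∏ i, (X - i * u)`.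
This monic product of degree `p` divides the monic `X ^ p - u ^ (p - 1) * X`, hence equals it, so
it generates the kernel of evaluation at the points `i * u`. -/

open Polynomial nonZeroDivisors

namespace Polynomial

variable {R : Type*} [CommRing R]

theorem prod_X_sub_C_dvd_of_isRoot_s8 {ι : Type*} [DecidableEq ι] {s : Finset ι} {a : ι → R}
    (ha : (s : Set ι).Pairwise fun i j => a i - a j ∈ R⁰) {f : R[X]}
    (hf : ∀ i ∈ s, f.IsRoot (a i)) : ∏ i ∈ s, (X - C (a i)) ∣ f := by
  induction s using Finset.induction_on generalizing f with
  | empty => exact one_dvd f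
  | insert k s hk ih =>
    have hfk := mul_divByMonic_eq_iff_isRoot.mpr (hf k (s.mem_insert_self k))
    rw [Finset.prod_insert hk, ← hfk]
    refine mul_dvd_mul_left _ (ih (ha.mono (by simp)) fun i hi => ?_)
    have hfi := hf i (Finset.mem_insert_of_mem hi)
    rw [← hfk, IsRoot, eval_mul, eval_sub, eval_X, eval_C] at hfi
    have hik : a i - a k ∈ R⁰ := ha (by simp [hi]) (by simp) (ne_of_mem_of_not_mem hi hk)
    exact mem_nonZeroDivisors_iff_left.mp hik _ hfi

theorem monic_X_pow_sub_C_mul_X {n : ℕ} (hn : 2 ≤ n) (c : R) : (X ^ n - C c * X).Monic := by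
  nontriviality R
  refine (monic_X_pow n).sub_of_left ?_
  rw [degree_X_pow]
  exact (degree_C_mul_X_le c).trans_lt (by exact_mod_cast hn)

theorem natDegree_X_pow_sub_C_mul_X_le {n : ℕ} (hn : 1 ≤ n) (c : R) :
    (X ^ n - C c * X).natDegree ≤ n :=
  (natDegree_sub_le _ _).trans <|
    max_le (natDegree_X_pow_le n) (((natDegree_C_mul_le c X).trans natDegree_X_le).trans hn)

end Polynomial

section CharP

variable {p : ℕ} [Fact p.Prime] {R : Type*} [CommRing R] [Algebra (ZMod p) R]

theorem natCast_pow_char_of_algebra (n : ℕ) : (n : R) ^ p = n := by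
  rw [← map_natCast (algebraMap (ZMod p) R), ← map_pow, ZMod.pow_card]

theorem isRoot_X_pow_sub_C_mul_X_natCast_mul (n : ℕ) (u : R) :
    (X ^ p - C (u ^ (p - 1)) * X).IsRoot (n * u) := by
  have hp := (Fact.out : p.Prime).one_le
  rw [IsRoot, eval_sub, eval_mul, eval_pow, eval_C, eval_X, mul_pow, natCast_pow_char_of_algebra,
    ← Nat.sub_add_cancel hp, pow_succ, Nat.sub_add_cancel hp]
  ring

theorem natCast_mul_sub_natCast_mul_mem_nonZeroDivisors {u : R} (hu : u ∈ R⁰) {i j : Fin p}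
    (hij : i ≠ j) : (i : ℕ) * u - (j : ℕ) * u ∈ R⁰ := by
  have hunit : IsUnit (((i : ℕ) : ZMod p) - (j : ℕ)) := by
    refine (sub_ne_zero.mpr fun h => hij (Fin.ext ?_)).isUnit
    simpa [ZMod.val_cast_of_lt i.isLt, ZMod.val_cast_of_lt j.isLt] using congrArg ZMod.val h
  rw [← sub_mul, ← map_natCast (algebraMap (ZMod p) R) i, ← map_natCast (algebraMap (ZMod p) R) j,
    ← map_sub]
  exact mul_mem_nonZeroDivisors.mpr ⟨(hunit.map _).mem_nonZeroDivisors, hu⟩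

theorem X_pow_sub_C_mul_X_eq_prod {u : R} (hu : u ∈ R⁰) :
    X ^ p - C (u ^ (p - 1)) * X = ∏ i : Fin p, (X - C ((i : ℕ) * u)) := by
  nontriviality R
  have hp : p.Prime := Fact.out
  have hdvd : ∏ i : Fin p, (X - C ((i : ℕ) * u)) ∣ X ^ p - C (u ^ (p - 1)) * X :=
    prod_X_sub_C_dvd_of_isRoot_s8
      (fun _ _ _ _ hij => natCast_mul_sub_natCast_mul_mem_nonZeroDivisors hu hij)
      (fun i _ => isRoot_X_pow_sub_C_mul_X_natCast_mul i u)
  refine eq_of_monic_of_dvd_of_natDegree_le (monic_prod_of_monic _ _ fun i _ => monic_X_sub_C _)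
    (monic_X_pow_sub_C_mul_X hp.two_le _) hdvd ?_
  rw [natDegree_finsetProd_X_sub_C_eq_card, Finset.card_univ, Fintype.card_fin]
  exact natDegree_X_pow_sub_C_mul_X_le hp.one_le _

end CharP

section EvalAtMultiples

variable {R : Type*} [CommRing R]

noncomputable def evalAtMultiples (n : ℕ) (u : R) : R[X] →ₐ[R] (Fin n → R) :=
  AlgHom.pi fun i => aeval ((i : ℕ) * u)

@[simp]
theorem evalAtMultiples_apply (n : ℕ) (u : R) (f : R[X]) (i : Fin n) :
    evalAtMultiples n u f i = f.eval ((i : ℕ) * u) :=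
  congrFun (coe_aeval_eq_eval _) f

theorem ker_evalAtMultiples {p : ℕ} [Fact p.Prime] [Algebra (ZMod p) R] {u : R} (hu : u ∈ R⁰) :
    RingHom.ker (evalAtMultiples p u) = Ideal.span {X ^ p - C (u ^ (p - 1)) * X} := by
  ext f
  rw [RingHom.mem_ker, Ideal.mem_span_singleton, X_pow_sub_C_mul_X_eq_prod hu, funext_iff]
  simp only [evalAtMultiples_apply, Pi.zero_apply]
  constructor
  · intro hf
    exact prod_X_sub_C_dvd_of_isRoot_s8
      (fun _ _ _ _ hij => natCast_mul_sub_natCast_mul_mem_nonZeroDivisors hu hij) fun i _ => hf i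
  · rintro ⟨q, rfl⟩ i
    simp [eval_prod, Finset.prod_eq_zero (Finset.mem_univ i)]

end EvalAtMultiples

theorem stmt_8 (p : ℕ) (hp : p.Prime) (R : Type*) [CommRing R] [Algebra (ZMod p) R]
    (u : R) (hu : u ∈ nonZeroDivisors R) :
    ∃ φ : (Polynomial R ⧸
        Ideal.span {Polynomial.X ^ p - Polynomial.C (u ^ (p - 1)) * Polynomial.X}) →ₐ[R]
        (Fin p → R),
      Function.Injective φ ∧
      ∀ (f : Polynomial R) (i : Fin p),
        φ (Ideal.Quotient.mk _ f) i = f.eval (((i : ℕ) : R) * u) := by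
  have : Fact p.Prime := ⟨hp⟩
  let e := Ideal.quotientEquivAlgOfEq R (ker_evalAtMultiples (p := p) hu).symm
  refine ⟨(Ideal.kerLiftAlg (evalAtMultiples p u)).comp e.toAlgHom, ?_, fun f i => ?_⟩
  · exact fun a b h => e.injective (Ideal.kerLiftAlg_injective _ h)
  · exact evalAtMultiples_apply p u f i
end
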